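/- Let k ≥ 1, z_k ∈ G_k nonempty with lsep(z_k, H_k) ≥ 2^k, and H'_k = H_k ∪ {z_k}. For every word w ∈ H'_k(0⁺H'_k)* and any two DFAs D, D' each with at most 2^{k/2} − 1 states, there exists w' ∈ H_k(0⁺H_k)* with δ_D(w) = δ_D(w') and δ_{D'}(w) = δ_{D'}(w'). -/
import Mathlib


open Computability

/-- The language `L_k` over the alphabet `{1,2}` (inside `Fin 3`). -/
def Lk (k : ℕ) : Language (Fin 3) :=
  {w | (∃ i, 1 ≤ i ∧ i ≤ k ∧ w = List.replicate (2 * i) (1 : Fin 3) ++ [2]) ∨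
    (∃ l : List ℕ, l ≠ [] ∧ (∀ a ∈ l, 1 ≤ a) ∧ l.sum = 2 * k + 1 ∧
      (∀ a ∈ l.dropLast, Even a) ∧
      w = (l.map (fun a => List.replicate a (1 : Fin 3) ++ [2])).flatten)}

/-- `G_k = L_k*`. -/
def Gk (k : ℕ) : Language (Fin 3) := (Lk k)∗

/-- `H_k = {1,2}* \ G_k`. -/
def Hk (k : ℕ) : Language (Fin 3) :=
  {w | (∀ c ∈ w, c = 1 ∨ c = 2) ∧ w ∉ Gk k}

/-- The language `0⁺` of nonempty blocks of zeros. -/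
def zeroPlus : Language (Fin 3) := {w | ∃ i, 1 ≤ i ∧ w = List.replicate i 0}

/-- Product DFA of two DFAs, with prescribed start state and accepting set. -/
def prodDFA {σ σ' : Type} (D : DFA (Fin 3) σ) (D' : DFA (Fin 3) σ')
    (s : σ) (s' : σ') (acc : Set (σ × σ')) : DFA (Fin 3) (σ × σ') :=
  ⟨fun p c => (D.step p.1 c, D'.step p.2 c), (s, s'), acc⟩

lemma prod_evalFrom {σ σ' : Type} (D : DFA (Fin 3) σ) (D' : DFA (Fin 3) σ')
    (s0 : σ) (s0' : σ') (acc : Set (σ × σ')) (p : σ) (q : σ') (x : List (Fin 3)) :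
    (prodDFA D D' s0 s0' acc).evalFrom (p, q) x = (D.evalFrom p x, D'.evalFrom q x) := by
  induction x generalizing p q with
  | nil => rfl
  | cons c x ih => exact ih (D.step p c) (D'.step q c)

theorem stmt_15 (k : ℕ) (hk : 1 ≤ k) (z : List (Fin 3)) (hz : z ∈ Gk k) (hz' : z ≠ [])
    (hlsep : ∀ {τ : Type} [Fintype τ] (M : DFA (Fin 3) τ),
      z ∈ M.accepts → (∀ w ∈ Hk k, w ∉ M.accepts) → 2 ^ k ≤ Fintype.card τ)
    (H' : Language (Fin 3)) (hH' : H' = Hk k ⊔ {z})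
    (w : List (Fin 3)) (hw : w ∈ H' * (zeroPlus * H')∗)
    {σ σ' : Type} [Fintype σ] [Fintype σ']
    (D : DFA (Fin 3) σ) (D' : DFA (Fin 3) σ')
    (hD : (Fintype.card σ : ℝ) ≤ 2 ^ ((k : ℝ) / 2) - 1)
    (hD' : (Fintype.card σ' : ℝ) ≤ 2 ^ ((k : ℝ) / 2) - 1) :
    ∃ w' ∈ Hk k * (zeroPlus * Hk k)∗,
      D.eval w = D.eval w' ∧ D'.eval w = D'.eval w' := by
  -- Step 1: the replacement lemma.
  have key : ∀ (s : σ) (s' : σ'), ∃ u ∈ Hk k,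
      D.evalFrom s z = D.evalFrom s u ∧ D'.evalFrom s' z = D'.evalFrom s' u := by
    intro s s'
    by_contra hcon
    push_neg at hcon
    set M : DFA (Fin 3) (σ × σ') :=
      prodDFA D D' s s' {(D.evalFrom s z, D'.evalFrom s' z)} with hM
    have hzacc : z ∈ M.accepts := by
      rw [DFA.mem_accepts]
      show M.evalFrom (s, s') z ∈ _
      rw [hM, prod_evalFrom]
      rfl
    have hrej : ∀ u ∈ Hk k, u ∉ M.accepts := by
      intro u hu hacc
      rw [DFA.mem_accepts] at hacc
      have : M.evalFrom (s, s') u ∈ ({(D.evalFrom s z, D'.evalFrom s' z)} : Set (σ × σ')) := hacc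
      rw [hM, prod_evalFrom, Set.mem_singleton_iff, Prod.ext_iff] at this
      exact hcon u hu this.1.symm this.2.symm
    have hcard : 2 ^ k ≤ Fintype.card (σ × σ') := hlsep M hzacc hrej
    have hcard' : (2 : ℝ) ^ k ≤ (Fintype.card σ : ℝ) * (Fintype.card σ' : ℝ) := by
      have := hcard
      rw [Fintype.card_prod] at this
      exact_mod_cast this
    have h1 : (1 : ℝ) ≤ 2 ^ ((k : ℝ) / 2) :=
      Real.one_le_rpow (by norm_num) (by positivity)
    have hsq : (2 : ℝ) ^ ((k : ℝ) / 2) * 2 ^ ((k : ℝ) / 2) = 2 ^ (k : ℕ) := by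
      rw [← Real.rpow_add (by norm_num)]
      rw [← Real.rpow_natCast 2 k]
      ring_nf
    have hmul : (Fintype.card σ : ℝ) * (Fintype.card σ' : ℝ)
        ≤ (2 ^ ((k : ℝ) / 2) - 1) * (2 ^ ((k : ℝ) / 2) - 1) := by
      apply mul_le_mul hD hD' (by positivity) (by linarith)
    nlinarith [hcard', hmul, hsq, h1]
  -- membership in H'
  have memH' : ∀ a ∈ H', a ∈ Hk k ∨ a = z := by
    intro a ha
    rw [hH'] at ha
    rcases ha with ha | ha
    · exact Or.inl ha
    · exact Or.inr ha
  -- Step 2: replace a single H'-word.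
  have keyB : ∀ a ∈ H', ∀ (s : σ) (s' : σ'), ∃ u ∈ Hk k,
      D.evalFrom s a = D.evalFrom s u ∧ D'.evalFrom s' a = D'.evalFrom s' u := by
    intro a ha s s'
    rcases memH' a ha with ha | rfl
    · exact ⟨a, ha, rfl, rfl⟩
    · exact key s s'
  -- Step 3: induction over the list of blocks.
  have keyL : ∀ (L : List (List (Fin 3))), (∀ y ∈ L, y ∈ zeroPlus * H') →
      ∀ (s : σ) (s' : σ'), ∃ L' : List (List (Fin 3)),
        (∀ y ∈ L', y ∈ zeroPlus * Hk k) ∧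
        D.evalFrom s L.flatten = D.evalFrom s L'.flatten ∧
        D'.evalFrom s' L.flatten = D'.evalFrom s' L'.flatten := by
    intro L
    induction L with
    | nil => intro _ s s'; exact ⟨[], by simp, rfl, rfl⟩
    | cons x L ih =>
      intro hmem s s'
      obtain ⟨z0, hz0, a, ha, hxa⟩ := Language.mem_mul.mp (hmem x (by simp))
      obtain ⟨u, hu, hu1, hu2⟩ := keyB a ha (D.evalFrom s z0) (D'.evalFrom s' z0)
      obtain ⟨L', hL', h1, h2⟩ := ih (fun y hy => hmem y (by simp [hy]))
        (D.evalFrom (D.evalFrom s z0) u) (D'.evalFrom (D'.evalFrom s' z0) u)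
      refine ⟨(z0 ++ u) :: L', ?_, ?_, ?_⟩
      · intro y hy
        rcases List.mem_cons.mp hy with rfl | hy
        · exact Language.mem_mul.mpr ⟨z0, hz0, u, hu, rfl⟩
        · exact hL' y hy
      · simp only [List.flatten_cons, ← hxa, List.append_assoc, DFA.evalFrom_of_append]
        rw [hu1]; exact h1
      · simp only [List.flatten_cons, ← hxa, List.append_assoc, DFA.evalFrom_of_append]
        rw [hu2]; exact h2
  -- Step 4: put it together.
  obtain ⟨a, ha, rest, hrest, hwa⟩ := Language.mem_mul.mp hw
  obtain ⟨L, hLflat, hLmem⟩ := Language.mem_kstar.mp hrest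
  obtain ⟨u, hu, hu1, hu2⟩ := keyB a ha D.start D'.start
  obtain ⟨L', hL', h1, h2⟩ := keyL L hLmem (D.evalFrom D.start u) (D'.evalFrom D'.start u)
  refine ⟨u ++ L'.flatten, ?_, ?_, ?_⟩
  · exact Language.mem_mul.mpr ⟨u, hu, L'.flatten,
      Language.mem_kstar.mpr ⟨L', rfl, hL'⟩, rfl⟩
  · show D.evalFrom D.start w = D.evalFrom D.start _
    rw [← hwa, hLflat, DFA.evalFrom_of_append, DFA.evalFrom_of_append, hu1, h1]
  · show D'.evalFrom D'.start w = D'.evalFrom D'.start _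
    rw [← hwa, hLflat, DFA.evalFrom_of_append, DFA.evalFrom_of_append, hu2, h2]
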